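/- Let π be a balanced policy under which agent a_1 does not receive exactly her k most preferred items in I, and let π' be the balanced policy obtained from π by moving all of a_1's turns to the end of the sequence while keeping the relative order of all other turns unchanged. Then agent a_1 also does not receive exactly her k most preferred items under π'. -/

import Mathlib

open Finset
open scoped Classical

/-- The most preferred item of a nonempty finset w.r.t. a linear order
(greater means more preferred). -/
noncomputable def favorite {ι : Type} (L : LinearOrder ι) (S : Finset ι) (h : S.Nonempty) : ι :=
  @Finset.max' ι L S h

/-- Sequential allocation: process the turns in order; at each turn the agent whose
turn it is picks her most preferred item among the items not yet allocated.
Returns the list of (agent, item) picks, in order. -/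
noncomputable def seqAlloc {n : ℕ} {ι : Type} [DecidableEq ι]
    (P : Fin n → LinearOrder ι) : List (Fin n) → Finset ι → List (Fin n × ι)
  | [], _ => []
  | a :: rest, S =>
    if h : S.Nonempty then
      (a, favorite (P a) S h) :: seqAlloc P rest (S.erase (favorite (P a) S h))
    else []

/-- `M` is the outcome of the policy `π`: every item is picked by the agent that
`M` assigns it to. -/
def IsOutcome {n : ℕ} {ι : Type} [Fintype ι] [DecidableEq ι]
    (P : Fin n → LinearOrder ι) (π : List (Fin n)) (M : ι → Fin n) : Prop :=
  ∀ o : ι, (M o, o) ∈ seqAlloc P π Finset.univ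

/-- The set of items that agent `a` picks under the policy `π`. -/
noncomputable def receives {n : ℕ} {ι : Type} [Fintype ι] [DecidableEq ι]
    (P : Fin n → LinearOrder ι) (π : List (Fin n)) (a : Fin n) : Finset ι :=
  Finset.univ.filter (fun o => (a, o) ∈ seqAlloc P π Finset.univ)

/-- An allocation `M` is Pareto optimal if there is no bijection `f` of the items such
that every agent weakly prefers `f o` to `o` for each item `o` she gets, with at least
one strict preference. -/
def ParetoOptimal {n : ℕ} {ι : Type} (P : Fin n → LinearOrder ι) (M : ι → Fin n) : Prop :=
  ¬ ∃ f : ι ≃ ι, (∀ o : ι, (P (M o)).le o (f o)) ∧ (∃ o : ι, (P (M o)).lt o (f o))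

/-- A policy is balanced if every agent has exactly `k` turns. -/
def BalancedPolicy {n : ℕ} (k : ℕ) (π : List (Fin n)) : Prop :=
  ∀ a : Fin n, π.count a = k

/-- An allocation is balanced if every agent receives exactly `k` items. -/
def BalancedAlloc {n : ℕ} {ι : Type} [Fintype ι] (k : ℕ) (M : ι → Fin n) : Prop :=
  ∀ a : Fin n, (Finset.univ.filter (fun o => M o = a)).card = k

/-- A policy is recursively balanced if it splits into `k` consecutive rounds of `n`
turns each, every agent having exactly one turn in each round. -/
def RecBalanced (n k : ℕ) (π : List (Fin n)) : Prop :=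
  ∃ rounds : List (List (Fin n)), rounds.length = k ∧
    (∀ r ∈ rounds, r.length = n ∧ ∀ a : Fin n, r.count a = 1) ∧
    π = rounds.flatten

/-- A strict alternation policy: every one of the `k` rounds uses the same order `σ`
over the agents. -/
def StrictAlt (n k : ℕ) (π : List (Fin n)) : Prop :=
  ∃ σ : List (Fin n), σ.length = n ∧ (∀ a : Fin n, σ.count a = 1) ∧
    π = (List.replicate k σ).flatten

/-- A balanced alternation policy: odd-numbered rounds use the order `σ` over the agents
and even-numbered rounds use its reverse. -/
def BalAlt (n k : ℕ) (π : List (Fin n)) : Prop :=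
  ∃ σ : List (Fin n), σ.length = n ∧ (∀ a : Fin n, σ.count a = 1) ∧
    π = ((List.range k).map (fun r => if r % 2 = 0 then σ else σ.reverse)).flatten

/-- `p j i` (for `1 ≤ i ≤ k`) is the item ranked `i`-th by agent `j` among the items `M`
allocates to `j`: it is allocated to `j`, and exactly `i - 1` of the items allocated
to `j` are strictly preferred to it by agent `j`. -/
def IsRankingOf {n : ℕ} {ι : Type} [Fintype ι] (P : Fin n → LinearOrder ι) (k : ℕ)
    (M : ι → Fin n) (p : Fin n → ℕ → ι) : Prop :=
  ∀ (j : Fin n) (i : ℕ), 1 ≤ i → i ≤ k →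
    M (p j i) = j ∧
    (Finset.univ.filter (fun o => M o = j ∧ (P j).lt (p j i) o)).card = i - 1

/-- Condition 3: for all `1 ≤ t < s ≤ k` and all agents `j, j'`, agent `j` strictly
prefers `p j t` to `p j' s`. -/
def Cond3 {n : ℕ} {ι : Type} (P : Fin n → LinearOrder ι) (k : ℕ) (p : Fin n → ℕ → ι) : Prop :=
  ∀ t s : ℕ, 1 ≤ t → t < s → s ≤ k → ∀ j j' : Fin n, (P j).lt (p j' s) (p j t)

/-- The edge relation of the directed graph `G_M`: for odd `i ≤ k` an edge `a → b`
whenever `b` strictly prefers `p a i` to `p b i`, and for even `i ≤ k` an edge `a → b`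
whenever `a` strictly prefers `p b i` to `p a i`. -/
def GM {n : ℕ} {ι : Type} (P : Fin n → LinearOrder ι) (k : ℕ) (p : Fin n → ℕ → ι)
    (a b : Fin n) : Prop :=
  (∃ i : ℕ, 1 ≤ i ∧ i ≤ k ∧ i % 2 = 1 ∧ (P b).lt (p b i) (p a i)) ∨
  (∃ i : ℕ, 1 ≤ i ∧ i ≤ k ∧ i % 2 = 0 ∧ (P a).lt (p a i) (p b i))

/-- The edge relation of the directed graph `H_M`: for each `i ≤ k` an edge `a → b`
whenever `b` strictly prefers `p a i` to `p b i`. -/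
def HM {n : ℕ} {ι : Type} (P : Fin n → LinearOrder ι) (k : ℕ) (p : Fin n → ℕ → ι)
    (a b : Fin n) : Prop :=
  ∃ i : ℕ, 1 ≤ i ∧ i ≤ k ∧ (P b).lt (p b i) (p a i)

/-- The `k` most preferred items of agent `j`: those items with fewer than `k` items
strictly preferred to them by `j`. -/
noncomputable def topItems {n : ℕ} {ι : Type} [Fintype ι] (P : Fin n → LinearOrder ι)
    (k : ℕ) (j : Fin n) : Finset ι :=
  Finset.univ.filter (fun o => (Finset.univ.filter (fun o' => (P j).lt o o')).card < k)

/-- The rank of item `o` in agent `j`'s preference (the most preferred item has rank 1). -/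
noncomputable def rankOf {n : ℕ} {ι : Type} [Fintype ι] (P : Fin n → LinearOrder ι)
    (j : Fin n) (o : ι) : ℕ :=
  (Finset.univ.filter (fun o' => (P j).lt o o')).card + 1

/-!
Let `ρ` be `π` with the turns of `a₁` deleted, and `T` her top `k` items. If `a₁` gets `T`
under `ρ` followed by her `k` turns, no other agent picks from `T` under `ρ`. Running `π` and
`ρ` side by side, the other agents then pick the same items in both runs, and whenever `a₁`
moves in `π` some item of `T` is still available, so her favourite one lies in `T`, an upper
set of her preference. Having `k = |T|` turns, she thus receives exactly `T` under `π`.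
-/

section LinearOrder

variable {α : Type} [Fintype α] [LinearOrder α]

lemma card_filter_lt_lt_card (a : α) : #{b | a < b} < Fintype.card α :=
  card_lt_card (filter_ssubset.mpr ⟨a, mem_univ a, lt_irrefl a⟩)

lemma strictAnti_card_filter_lt : StrictAnti fun a : α => #{b | a < b} := by
  intro a a' haa'
  refine card_lt_card ⟨fun b hb => ?_, fun hsub => ?_⟩
  · simp only [mem_filter, mem_univ, true_and] at hb ⊢
    exact haa'.trans hb
  · have := hsub (mem_filter.mpr ⟨mem_univ a', haa'⟩)
    exact lt_irrefl a' (mem_filter.mp this).2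

lemma card_filter_card_filter_lt_lt {k : ℕ} (hk : k ≤ Fintype.card α) :
    #{a : α | #{b | a < b} < k} = k := by
  set f : α → ℕ := fun a => #{b | a < b}
  have hf : Function.Injective f := strictAnti_card_filter_lt.injective
  have himage : univ.image f = range (Fintype.card α) :=
    eq_of_subset_of_card_le (fun m hm => by
        obtain ⟨a, -, rfl⟩ := mem_image.mp hm
        exact mem_range.mpr (card_filter_lt_lt_card a))
      (by rw [card_image_of_injective _ hf, card_range, card_univ])
  calc #{a : α | f a < k}
      = #((univ.filter fun a => f a < k).image f) := (card_image_of_injective _ hf).symm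
    _ = #((range (Fintype.card α)).filter (· < k)) := by rw [← himage, filter_image]
    _ = k := by
      rw [← Nat.Iio_eq_range, Iio_filter_lt, Nat.card_Iio, min_eq_right hk]

end LinearOrder

lemma favorite_mem {ι : Type} (L : LinearOrder ι) {S : Finset ι} (h : S.Nonempty) :
    favorite L S h ∈ S :=
  @max'_mem ι L S h

lemma le_favorite {ι : Type} (L : LinearOrder ι) {S : Finset ι} (h : S.Nonempty) {o : ι}
    (ho : o ∈ S) : L.le o (favorite L S h) :=
  @le_max' ι L S o ho

lemma favorite_eq_of_subset {ι : Type} (L : LinearOrder ι) {S S' : Finset ι} (hS : S.Nonempty)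
    (hS' : S'.Nonempty) (hSS' : S ⊆ S') (hmem : favorite L S' hS' ∈ S) :
    favorite L S hS = favorite L S' hS' :=
  L.le_antisymm _ _ (le_favorite L hS' (hSS' (favorite_mem L hS))) (le_favorite L hS hmem)

section SequentialAllocation

variable {ι : Type} [DecidableEq ι] {n : ℕ} (P : Fin n → LinearOrder ι)

noncomputable def unallocated : List (Fin n) → Finset ι → Finset ι
  | [], S => S
  | a :: rest, S =>
    if h : S.Nonempty then unallocated rest (S.erase (favorite (P a) S h)) else S

lemma seqAlloc_cons_of_nonempty (a : Fin n) (rest : List (Fin n)) {S : Finset ι}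
    (h : S.Nonempty) :
    seqAlloc P (a :: rest) S =
      (a, favorite (P a) S h) :: seqAlloc P rest (S.erase (favorite (P a) S h)) := by
  simp [seqAlloc, h]

lemma seqAlloc_empty (l : List (Fin n)) : seqAlloc P l (∅ : Finset ι) = [] := by
  cases l <;> simp [seqAlloc]

lemma unallocated_cons_of_nonempty (a : Fin n) (rest : List (Fin n)) {S : Finset ι}
    (h : S.Nonempty) :
    unallocated P (a :: rest) S = unallocated P rest (S.erase (favorite (P a) S h)) := by
  simp [unallocated, h]

lemma unallocated_subset (l : List (Fin n)) (S : Finset ι) : unallocated P l S ⊆ S := by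
  induction l generalizing S with
  | nil => exact subset_rfl
  | cons a rest ih =>
    by_cases h : S.Nonempty
    · rw [unallocated_cons_of_nonempty P a rest h]
      exact (ih _).trans (erase_subset _ _)
    · simp [unallocated, h]

lemma mem_of_mem_seqAlloc {l : List (Fin n)} {S : Finset ι} {b : Fin n} {o : ι}
    (h : (b, o) ∈ seqAlloc P l S) : b ∈ l ∧ o ∈ S := by
  induction l generalizing S with
  | nil => simp [seqAlloc] at h
  | cons a rest ih =>
    by_cases hS : S.Nonempty
    · rw [seqAlloc_cons_of_nonempty P a rest hS, List.mem_cons, Prod.mk.injEq] at h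
      rcases h with ⟨rfl, rfl⟩ | h
      · exact ⟨List.mem_cons_self, favorite_mem _ hS⟩
      · obtain ⟨hb, ho⟩ := ih h
        exact ⟨List.mem_cons_of_mem _ hb, mem_of_mem_erase ho⟩
    · simp [seqAlloc, hS] at h

lemma seqAlloc_append (l₁ l₂ : List (Fin n)) (S : Finset ι) :
    seqAlloc P (l₁ ++ l₂) S = seqAlloc P l₁ S ++ seqAlloc P l₂ (unallocated P l₁ S) := by
  induction l₁ generalizing S with
  | nil => rfl
  | cons a rest ih =>
    by_cases h : S.Nonempty
    · rw [List.cons_append, seqAlloc_cons_of_nonempty P a _ h, seqAlloc_cons_of_nonempty P a _ h,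
        unallocated_cons_of_nonempty P a _ h, ih, List.cons_append]
    · rw [not_nonempty_iff_eq_empty.mp h]
      simp [seqAlloc_empty, unallocated]

lemma mem_unallocated_of_mem_seqAlloc_append {a : Fin n} {l₁ : List (Fin n)} (ha : a ∉ l₁)
    {l₂ : List (Fin n)} {S : Finset ι} {o : ι} (h : (a, o) ∈ seqAlloc P (l₁ ++ l₂) S) :
    o ∈ unallocated P l₁ S := by
  rw [seqAlloc_append, List.mem_append] at h
  rcases h with h | h
  · exact absurd (mem_of_mem_seqAlloc P h).1 ha
  · exact (mem_of_mem_seqAlloc P h).2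

/-- `A` is what is left in the run of `l`, and `A ∪ T` what is left at the same moment in the
run of `l` without `a`'s turns. -/
theorem mem_seqAlloc_iff_of_subset_unallocated {a : Fin n} {T : Finset ι}
    (hT : ∀ o ∈ T, ∀ o', (P a).le o o' → o' ∈ T) (l : List (Fin n)) {A : Finset ι}
    (hothers : T ⊆ unallocated P (l.filter (fun b => b ≠ a)) (A ∪ T))
    (hcount : #(A ∩ T) = l.count a) (o : ι) :
    (a, o) ∈ seqAlloc P l A ↔ o ∈ A ∩ T := by
  induction l generalizing A with
  | nil =>
    rw [List.count_nil, card_eq_zero] at hcount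
    simp [seqAlloc, hcount]
  | cons c rest ih =>
    by_cases hc : c = a
    · subst hc
      obtain ⟨t, ht⟩ : (A ∩ T).Nonempty := by
        rw [← card_pos, hcount, List.count_cons_self]; omega
      have hA : A.Nonempty := ⟨t, (mem_inter.mp ht).1⟩
      obtain ⟨x, hx⟩ : ∃ x, favorite (P c) A hA = x := ⟨_, rfl⟩
      have hxA : x ∈ A := hx ▸ favorite_mem _ hA
      have hxT : x ∈ T := hT t (mem_inter.mp ht).2 x (hx ▸ le_favorite _ hA (mem_inter.mp ht).1)
      have hunion : A.erase x ∪ T = A ∪ T := by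
        ext p; by_cases hp : p = x <;> simp [hp, hxA, hxT]
      have ih' := ih (A := A.erase x) (by simpa [hunion] using hothers) (by
        rw [erase_inter, card_erase_of_mem (mem_inter.mpr ⟨hxA, hxT⟩), hcount,
          List.count_cons_self]; rfl)
      rw [seqAlloc_cons_of_nonempty P c rest hA, hx, List.mem_cons, ih']
      by_cases ho : o = x <;> simp [ho, hxA, hxT]
    · by_cases hA : A.Nonempty
      swap
      · rw [not_nonempty_iff_eq_empty.mp hA]
        simp [seqAlloc_empty]
      have hB : (A ∪ T).Nonempty := hA.mono subset_union_left
      obtain ⟨y, hy⟩ : ∃ y, favorite (P c) (A ∪ T) hB = y := ⟨_, rfl⟩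
      rw [List.filter_cons_of_pos (by simpa using hc), unallocated_cons_of_nonempty P c _ hB,
        hy] at hothers
      have hyT : y ∉ T := fun hyT =>
        notMem_erase y (A ∪ T) (unallocated_subset P _ _ (hothers hyT))
      have hyA : y ∈ A := (mem_union.mp (hy ▸ favorite_mem _ hB)).resolve_right hyT
      have hxy : favorite (P c) A hA = y :=
        hy ▸ favorite_eq_of_subset _ hA hB subset_union_left (hy ▸ hyA)
      have hunion : A.erase y ∪ T = (A ∪ T).erase y := by
        ext p; by_cases hp : p = y <;> simp [hp, hyT]
      have ih' := ih (A := A.erase y) (by rwa [hunion]) (by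
        rw [erase_inter, erase_eq_of_notMem (fun h => hyT (mem_inter.mp h).2), hcount,
          List.count_cons_of_ne hc])
      rw [seqAlloc_cons_of_nonempty P c rest hA, hxy, List.mem_cons, ih']
      by_cases ho : o = y <;> simp [ho, hyT, Ne.symm hc]

end SequentialAllocation

section TopItems

variable {ι : Type} [Fintype ι] {n : ℕ} (P : Fin n → LinearOrder ι)

lemma card_topItems {k : ℕ} (j : Fin n) (hk : k ≤ Fintype.card ι) : #(topItems P k j) = k := by
  let := P j
  unfold topItems
  convert card_filter_card_filter_lt_lt hk

lemma mem_topItems_of_le {k : ℕ} {j : Fin n} {o o' : ι} (ho : o ∈ topItems P k j)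
    (hle : (P j).le o o') : o' ∈ topItems P k j := by
  simp only [topItems, mem_filter, mem_univ, true_and] at ho ⊢
  refine lt_of_le_of_lt (card_le_card fun p hp => ?_) ho
  simp only [mem_filter, mem_univ, true_and] at hp ⊢
  exact @lt_of_le_of_lt ι (P j).toPreorder _ _ _ hle hp

end TopItems

theorem move_turns_to_end_general
    {ι : Type} [Fintype ι] [DecidableEq ι] {n k : ℕ}
    (hcard : Fintype.card ι = k * n)
    (P : Fin n → LinearOrder ι) (a1 : Fin n) (π : List (Fin n))
    (hπ : BalancedPolicy k π)
    (h : receives P π a1 ≠ topItems P k a1) :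
    receives P (π.filter (fun a => a ≠ a1) ++ List.replicate k a1) a1
      ≠ topItems P k a1 := by
  intro hmoved
  refine h (ext fun o => ?_)
  have hothers : topItems P k a1 ⊆ unallocated P (π.filter (fun a => a ≠ a1)) univ := by
    rw [← hmoved]
    intro p hp
    exact mem_unallocated_of_mem_seqAlloc_append P (by simp) (mem_filter.mp hp).2
  have hk : k ≤ Fintype.card ι := hcard ▸ Nat.le_mul_of_pos_right k (Fin.pos a1)
  have key := mem_seqAlloc_iff_of_subset_unallocated P (a := a1) (T := topItems P k a1)
    (fun _ ho _ => mem_topItems_of_le P ho) π (A := univ)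
    (by rwa [union_eq_left.mpr (subset_univ _)])
    (by rw [univ_inter, card_topItems P a1 hk, hπ a1]) o
  simpa [receives] using key

/-- If under a balanced policy `π` agent `a_1` does not receive exactly her
`k` most preferred items, then she does not receive them either under the balanced
policy obtained from `π` by moving all of `a_1`'s turns to the end (keeping the relative
order of the other turns). -/
theorem move_turns_to_end
    {ι : Type} [Fintype ι] [DecidableEq ι] {n k : ℕ} (hn : 0 < n) (hk : 1 ≤ k)
    (hcard : Fintype.card ι = k * n)
    (P : Fin n → LinearOrder ι) (a1 : Fin n) (π : List (Fin n))
    (hπ : BalancedPolicy k π)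
    (h : receives P π a1 ≠ topItems P k a1) :
    receives P (π.filter (fun a => a ≠ a1) ++ List.replicate k a1) a1
      ≠ topItems P k a1 :=
  move_turns_to_end_general hcard P a1 π hπ h
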